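/- For every integer n ≥ 1, the auxiliary quantities satisfy r_{n+1}(t) + r_n(t) = γ + (t − α_n) R_n(t). -/

import Mathlib

/-!
Monic orthogonal polynomials obey the three-term recurrence
`y P_n = P_{n+1} + α_n P_n + (h_n / h_{n-1}) P_{n-1}`, a purely algebraic consequence of
orthogonality for any moment functional with nonzero norms. Multiply it by `P_n(y) w(y) / (y - t)`
and integrate: the left side is `(h_n / γ) (r_{n+1} + r_n)`, and on the right
`y - α_n = (y - t) + (t - α_n)` gives `h_n + (t - α_n) h_n R_n / γ`, the factor `y - t`
cancelling because `w(t) = 0`. Analytically one only needs `Q w` and `Q w / (y - t)` to be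
integrable for every polynomial `Q`, which follows from `|w(y)| ≤ C |y - t|^γ e^{-y² + ty}`
with `γ > 0`.
-/

open MeasureTheory Polynomial Real

namespace Polynomial

variable {R : Type*} [CommRing R]

theorem IsMonicOfDegree.degree_sub_C_coeff_mul_lt {p Q : R[X]} {n : ℕ}
    (hp : IsMonicOfDegree p n) (hQ : Q.natDegree ≤ n) : (Q - C (Q.coeff n) * p).degree < n := by
  rw [degree_lt_iff_coeff_zero]
  intro k hk
  rcases hk.eq_or_lt with rfl | hlt
  · rw [coeff_sub, coeff_C_mul, ← hp.natDegree_eq, hp.monic.coeff_natDegree, mul_one, sub_self]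
  · rw [coeff_sub, coeff_C_mul, coeff_eq_zero_of_natDegree_lt (p := Q) (by omega),
      coeff_eq_zero_of_natDegree_lt (p := p) (by rw [hp.natDegree_eq]; omega), mul_zero,
      sub_zero]

variable {P : ℕ → R[X]}

theorem mem_span_image_Iio_of_degree_lt (hP : ∀ n, IsMonicOfDegree (P n) n) {m : ℕ} {Q : R[X]}
    (hQ : Q.degree < m) : Q ∈ Submodule.span R (P '' Set.Iio m) := by
  induction m generalizing Q with
  | zero =>
    rw [Nat.cast_zero, Nat.WithBot.lt_zero_iff, degree_eq_bot] at hQ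
    exact hQ ▸ Submodule.zero_mem _
  | succ m ih =>
    have hQm : Q.natDegree ≤ m := by
      rw [degree_lt_iff_coeff_zero] at hQ
      exact natDegree_le_iff_coeff_eq_zero.2 fun k hk => hQ k hk
    have hrest := ih ((hP m).degree_sub_C_coeff_mul_lt hQm)
    rw [← sub_add_cancel Q (C (Q.coeff m) * P m)]
    rw [C_mul'] at hrest ⊢
    refine add_mem (Submodule.span_mono (Set.image_mono ?_) hrest)
      (Submodule.smul_mem _ _ (Submodule.subset_span ⟨m, Set.mem_Iio.2 m.lt_succ_self, rfl⟩))
    exact Set.Iio_subset_Iio m.le_succ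

variable (L : R[X] →ₗ[R] R)

theorem apply_mul_eq_zero_of_degree_lt (hP : ∀ n, IsMonicOfDegree (P n) n)
    (horth : ∀ m n, m ≠ n → L (P m * P n) = 0) {n : ℕ} {Q : R[X]} (hQ : Q.degree < n) :
    L (Q * P n) = 0 := by
  have hspan : P '' Set.Iio n ⊆ LinearMap.ker (L ∘ₗ LinearMap.mulRight R (P n)) := by
    rintro _ ⟨k, hk, rfl⟩
    exact horth k n (Set.mem_Iio.1 hk).ne
  exact Submodule.span_le.2 hspan (mem_span_image_Iio_of_degree_lt hP hQ)

theorem apply_mul_eq_coeff_mul (hP : ∀ n, IsMonicOfDegree (P n) n)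
    (horth : ∀ m n, m ≠ n → L (P m * P n) = 0) {n : ℕ} {Q : R[X]} (hQ : Q.natDegree ≤ n) :
    L (Q * P n) = Q.coeff n * L (P n * P n) := by
  have h := apply_mul_eq_zero_of_degree_lt L hP horth ((hP n).degree_sub_C_coeff_mul_lt hQ)
  rwa [sub_mul, map_sub, mul_assoc, C_mul', map_smul, smul_eq_mul, sub_eq_zero] at h

theorem eq_zero_of_apply_mul_eq_zero [NoZeroDivisors R] (hP : ∀ n, IsMonicOfDegree (P n) n)
    (horth : ∀ m n, m ≠ n → L (P m * P n) = 0) (hnorm : ∀ n, L (P n * P n) ≠ 0) {n : ℕ}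
    {Q : R[X]} (hQ : Q.natDegree ≤ n) (hL : ∀ k ≤ n, L (Q * P k) = 0) : Q = 0 := by
  by_contra hQ0
  have h := apply_mul_eq_coeff_mul L hP horth le_rfl (Q := Q)
  rw [hL _ hQ, eq_comm, mul_eq_zero] at h
  exact h.elim (leadingCoeff_ne_zero.2 hQ0) (hnorm _)

theorem apply_X_mul_mul_of_le (hP : ∀ n, IsMonicOfDegree (P n) n)
    (horth : ∀ m n, m ≠ n → L (P m * P n) = 0) {n k : ℕ} (hk : k ≤ n) :
    L (X * P (n + 1) * P k) = (P k).coeff n * L (P (n + 1) * P (n + 1)) := by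
  rw [mul_right_comm, apply_mul_eq_coeff_mul L hP horth, coeff_X_mul]
  calc (X * P k).natDegree ≤ 1 + k :=
        natDegree_mul_le.trans (add_le_add natDegree_X_le (hP k).natDegree_eq.le)
    _ ≤ n + 1 := by omega

section Field

variable {K : Type*} [Field K] (L : K[X] →ₗ[K] K) {P : ℕ → K[X]}

theorem X_mul_eq_three_term (hP : ∀ n, IsMonicOfDegree (P n) n)
    (horth : ∀ m n, m ≠ n → L (P m * P n) = 0) (hnorm : ∀ n, L (P n * P n) ≠ 0) (n : ℕ) :
    X * P (n + 1) = P (n + 2)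
      + C (L (X * P (n + 1) * P (n + 1)) / L (P (n + 1) * P (n + 1))) * P (n + 1)
      + C (L (P (n + 1) * P (n + 1)) / L (P n * P n)) * P n := by
  set a := L (X * P (n + 1) * P (n + 1)) / L (P (n + 1) * P (n + 1)) with ha
  set b := L (P (n + 1) * P (n + 1)) / L (P n * P n) with hb
  rw [← sub_eq_zero, sub_add_eq_sub_sub, sub_add_eq_sub_sub]
  refine eq_zero_of_apply_mul_eq_zero L hP horth hnorm (n := n + 1) ?_ fun k hk => ?_
  · have hXP : IsMonicOfDegree (X * P (n + 1)) (n + 2) := by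
      convert (isMonicOfDegree_X K).mul (hP (n + 1)) using 1; omega
    have h1 : (X * P (n + 1) - P (n + 2)).natDegree ≤ n + 1 :=
      Nat.le_of_lt_succ (hXP.natDegree_sub_lt (by omega) (hP _))
    have h2 : (C a * P (n + 1)).natDegree ≤ n + 1 :=
      (natDegree_C_mul_le _ _).trans (hP _).natDegree_eq.le
    have h3 : (C b * P n).natDegree ≤ n + 1 :=
      (natDegree_C_mul_le _ _).trans ((hP n).natDegree_eq.trans_le n.le_succ)
    exact (natDegree_sub_le_of_le (natDegree_sub_le_of_le h1 h2) h3).trans (by simp)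
  · rw [sub_mul, sub_mul, sub_mul, map_sub, map_sub, map_sub, mul_assoc (C a), mul_assoc (C b),
      C_mul', C_mul', map_smul, map_smul, smul_eq_mul, smul_eq_mul]
    rcases (by omega : k = n + 1 ∨ k = n ∨ k < n) with hk | hk | hkn
    · subst k
      rw [horth (n + 2) (n + 1) (by omega), horth n (n + 1) (by omega), ha,
        div_mul_cancel₀ _ (hnorm _)]
      ring
    · subst k
      have hlc : (P n).coeff n = 1 := by
        have := (hP n).monic.coeff_natDegree
        rwa [(hP n).natDegree_eq] at this
      rw [apply_X_mul_mul_of_le L hP horth le_rfl, hlc, horth (n + 2) n (by omega),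
        horth (n + 1) n (by omega), hb, div_mul_cancel₀ _ (hnorm _)]
      ring
    · rw [apply_X_mul_mul_of_le L hP horth hkn.le,
        coeff_eq_zero_of_natDegree_lt (by rw [(hP k).natDegree_eq]; exact hkn),
        horth (n + 2) k (by omega), horth (n + 1) k (by omega), horth n k (by omega)]
      ring

theorem apply_three_term_of_apply_X_sub_C_mul (hP : ∀ n, IsMonicOfDegree (P n) n)
    (horth : ∀ m n, m ≠ n → L (P m * P n) = 0) (hnorm : ∀ n, L (P n * P n) ≠ 0)
    {M : K[X] →ₗ[K] K} {t : K} (hM : ∀ p, M ((X - C t) * p) = L p) (n : ℕ) :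
    M (P (n + 2) * P (n + 1)) +
        L (P (n + 1) * P (n + 1)) / L (P n * P n) * M (P (n + 1) * P n) =
      L (P (n + 1) * P (n + 1)) +
        (t - L (X * P (n + 1) * P (n + 1)) / L (P (n + 1) * P (n + 1))) *
          M (P (n + 1) * P (n + 1)) := by
  have hpoly : P (n + 2) * P (n + 1) +
        C (L (P (n + 1) * P (n + 1)) / L (P n * P n)) * (P (n + 1) * P n) =
      (X - C t) * (P (n + 1) * P (n + 1)) +
        C (t - L (X * P (n + 1) * P (n + 1)) / L (P (n + 1) * P (n + 1))) *
          (P (n + 1) * P (n + 1)) := by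
    rw [C_sub]
    linear_combination (-P (n + 1)) * X_mul_eq_three_term L hP horth hnorm n
  have := congrArg M hpoly
  rwa [map_add, map_add, C_mul', C_mul', map_smul, map_smul, smul_eq_mul, smul_eq_mul, hM]
    at this

end Field

end Polynomial

theorem integrable_abs_rpow_mul_exp_neg_mul_sq {b s : ℝ} (hb : 0 < b) (hs : -1 < s) :
    Integrable fun x : ℝ => |x| ^ s * exp (-b * x ^ 2) := by
  have hpos : IntegrableOn (fun x : ℝ => |x| ^ s * exp (-b * x ^ 2)) (Set.Ioi 0) :=
    (integrableOn_rpow_mul_exp_neg_mul_sq hb hs).congr_fun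
      (fun x hx => by rw [abs_of_pos hx]) measurableSet_Ioi
  rw [← integrableOn_univ, ← Set.Iio_union_Ici (a := (0 : ℝ)), integrableOn_union,
    integrableOn_Ici_iff_integrableOn_Ioi]
  refine ⟨?_, hpos⟩
  rw [← (Measure.measurePreserving_neg (volume : Measure ℝ)).integrableOn_comp_preimage
      (Homeomorph.neg ℝ).measurableEmbedding]
  simpa [Function.comp_def, neg_sq, abs_neg] using hpos

theorem Polynomial.integrable_eval_mul_abs_rpow_mul_exp_neg_mul_sq (Q : ℝ[X]) {b s : ℝ}
    (hb : 0 < b) (hs : -1 < s) :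
    Integrable fun x : ℝ => Q.eval x * (|x| ^ s * exp (-b * x ^ 2)) := by
  simp_rw [eval_eq_sum_range, Finset.sum_mul, mul_assoc]
  refine integrable_finsetSum _ fun i _ => Integrable.const_mul ?_ _
  refine (integrable_abs_rpow_mul_exp_neg_mul_sq hb (s := s + i)
    (by linarith [i.cast_nonneg (α := ℝ)])).mono' (by fun_prop) (ae_of_all _ fun x => ?_)
  rw [norm_mul, norm_mul, norm_pow, Real.norm_eq_abs,
    norm_of_nonneg (rpow_nonneg (abs_nonneg x) _), norm_of_nonneg (exp_pos _).le, ← mul_assoc]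
  rcases Nat.eq_zero_or_pos i with rfl | hi
  · simp
  · have hsi : 0 < s + i := by linarith [(Nat.one_le_cast (α := ℝ)).2 hi]
    rw [rpow_add_natCast' (abs_nonneg x) hsi.ne', mul_comm (|x| ^ s)]

theorem Polynomial.integrable_eval_mul_abs_sub_rpow_mul_exp_neg_mul_sq (Q : ℝ[X]) (t : ℝ)
    {b s : ℝ} (hb : 0 < b) (hs : -1 < s) :
    Integrable fun y : ℝ => Q.eval y * (|y - t| ^ s * exp (-b * (y - t) ^ 2)) := by
  have h :=
    ((Q.comp (X + C t)).integrable_eval_mul_abs_rpow_mul_exp_neg_mul_sq hb hs).comp_sub_right t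
  simp only [eval_comp, eval_add, eval_X, eval_C, sub_add_cancel] at h
  exact h

theorem Polynomial.integrable_eval_mul_of_abs_le {v : ℝ → ℝ} {t s c : ℝ} (hs : -1 < s)
    (hv : AEStronglyMeasurable v)
    (hbound : ∀ y, |v y| ≤ c * |y - t| ^ s * exp (-y ^ 2 + t * y)) (Q : ℝ[X]) :
    Integrable fun y => Q.eval y * v y := by
  refine (((Q.integrable_eval_mul_abs_sub_rpow_mul_exp_neg_mul_sq t (b := 1 / 2) (by norm_num)
    hs).norm.const_mul (c * exp (t ^ 2 / 2))).mono' (Q.continuous.aestronglyMeasurable.mul hv)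
    (ae_of_all _ fun y => ?_))
  have hexp : exp (-y ^ 2 + t * y) ≤ exp (t ^ 2 / 2) * exp (-(1 / 2) * (y - t) ^ 2) := by
    rw [← exp_add]
    exact exp_le_exp.2 (by nlinarith [sq_nonneg y])
  have hc : 0 ≤ c * |y - t| ^ s :=
    nonneg_of_mul_nonneg_left ((abs_nonneg _).trans (hbound y)) (exp_pos _)
  have hr : 0 ≤ |y - t| ^ s := rpow_nonneg (abs_nonneg _) _
  rw [norm_mul, norm_mul, norm_mul, norm_of_nonneg hr, norm_of_nonneg (exp_pos _).le,
    Real.norm_eq_abs, Real.norm_eq_abs]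
  calc |Q.eval y| * |v y| ≤ |Q.eval y| * (c * |y - t| ^ s * exp (-y ^ 2 + t * y)) := by
        gcongr; exact hbound y
    _ ≤ |Q.eval y| * (c * |y - t| ^ s * (exp (t ^ 2 / 2) * exp (-(1 / 2) * (y - t) ^ 2))) := by
        gcongr
    _ = _ := by ring

/-- The weight `w` of the statement: a Gaussian with a root-type singularity and a jump at `t`. -/
noncomputable def fisherHartwigWeight (t γ A B y : ℝ) : ℝ :=
  exp (-y ^ 2 + t * y) * |y - t| ^ γ * (A + B * (if 0 < y - t then (1 : ℝ) else 0))

section FisherHartwigWeight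

variable {t γ A B : ℝ}

theorem measurable_fisherHartwigWeight : Measurable (fisherHartwigWeight t γ A B) := by
  refine (by fun_prop : Measurable fun y : ℝ => exp (-y ^ 2 + t * y) * |y - t| ^ γ).mul
    (measurable_const.add (measurable_const.mul ?_))
  exact Measurable.ite (measurableSet_lt measurable_const (measurable_id.sub_const t))
    measurable_const measurable_const

theorem fisherHartwigWeight_self (hγ : γ ≠ 0) : fisherHartwigWeight t γ A B t = 0 := by
  simp [fisherHartwigWeight, zero_rpow hγ]

theorem abs_fisherHartwigWeight_le (y : ℝ) :
    |fisherHartwigWeight t γ A B y| ≤ (|A| + |B|) * |y - t| ^ γ * exp (-y ^ 2 + t * y) := by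
  have hjump : |A + B * (if 0 < y - t then (1 : ℝ) else 0)| ≤ |A| + |B| := by
    exact (abs_add_le _ _).trans (add_le_add le_rfl (by split_ifs <;> simp))
  rw [fisherHartwigWeight, abs_mul, abs_mul, abs_of_pos (exp_pos _),
    abs_of_nonneg (rpow_nonneg (abs_nonneg _) _)]
  calc exp (-y ^ 2 + t * y) * |y - t| ^ γ * |A + B * (if 0 < y - t then (1 : ℝ) else 0)|
      ≤ exp (-y ^ 2 + t * y) * |y - t| ^ γ * (|A| + |B|) := by gcongr
    _ = _ := by ring

theorem abs_fisherHartwigWeight_div_le (y : ℝ) :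
    |fisherHartwigWeight t γ A B y / (y - t)| ≤
      (|A| + |B|) * |y - t| ^ (γ - 1) * exp (-y ^ 2 + t * y) := by
  rcases eq_or_ne y t with rfl | hy
  -- at `y = t` the quotient is `0` by the convention `x / 0 = 0`
  · rw [sub_self, div_zero, abs_zero]
    have := rpow_nonneg (abs_nonneg (y - y)) (γ - 1)
    positivity
  · have hyt : 0 < |y - t| := abs_pos.2 (sub_ne_zero.2 hy)
    rw [abs_div, div_le_iff₀ hyt]
    calc |fisherHartwigWeight t γ A B y| ≤ (|A| + |B|) * |y - t| ^ γ * exp (-y ^ 2 + t * y) :=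
          abs_fisherHartwigWeight_le y
      _ = _ := by rw [rpow_sub_one hyt.ne']; field_simp

theorem integrable_eval_mul_fisherHartwigWeight (hγ : -1 < γ) (Q : ℝ[X]) :
    Integrable fun y => Q.eval y * fisherHartwigWeight t γ A B y :=
  Q.integrable_eval_mul_of_abs_le hγ measurable_fisherHartwigWeight.aestronglyMeasurable
    abs_fisherHartwigWeight_le

theorem integrable_eval_mul_fisherHartwigWeight_div (hγ : 0 < γ) (Q : ℝ[X]) :
    Integrable fun y => Q.eval y * (fisherHartwigWeight t γ A B y / (y - t)) :=
  Q.integrable_eval_mul_of_abs_le (s := γ - 1) (by linarith)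
    (measurable_fisherHartwigWeight.div (measurable_id.sub_const t)).aestronglyMeasurable
    abs_fisherHartwigWeight_div_le

end FisherHartwigWeight

noncomputable def integralFunctional (w : ℝ → ℝ)
    (hw : ∀ Q : ℝ[X], Integrable fun y => Q.eval y * w y) : ℝ[X] →ₗ[ℝ] ℝ where
  toFun Q := ∫ y, Q.eval y * w y
  map_add' p q := by simp only [eval_add, add_mul]; exact integral_add (hw p) (hw q)
  map_smul' c p := by
    simp only [eval_smul, smul_eq_mul, mul_assoc, RingHom.id_apply]
    exact integral_const_mul c _

theorem integralFunctional_apply (w : ℝ → ℝ)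
    (hw : ∀ Q : ℝ[X], Integrable fun y => Q.eval y * w y) (Q : ℝ[X]) :
    integralFunctional w hw Q = ∫ y, Q.eval y * w y :=
  rfl

theorem integralFunctional_div_sub_X_sub_C_mul {w : ℝ → ℝ} {t : ℝ} (hwt : w t = 0)
    (hw : ∀ Q : ℝ[X], Integrable fun y => Q.eval y * w y)
    (hw' : ∀ Q : ℝ[X], Integrable fun y => Q.eval y * (w y / (y - t))) (p : ℝ[X]) :
    integralFunctional (fun y => w y / (y - t)) hw' ((X - C t) * p) =
      integralFunctional w hw p := by
  refine integral_congr_ae (ae_of_all _ fun y => ?_)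
  rcases eq_or_ne y t with rfl | hy
  · simp [hwt]
  · simp only [eval_mul, eval_sub, eval_X, eval_C]
    field_simp [sub_ne_zero.2 hy]

theorem r_sum_identity_general
    (t γ A B : ℝ) (hγ : 0 < γ)
    (w : ℝ → ℝ)
    (hw : ∀ y : ℝ, w y =
      Real.exp (-y ^ 2 + t * y) * |y - t| ^ γ *
        (A + B * (if 0 < y - t then (1 : ℝ) else 0)))
    (P : ℕ → Polynomial ℝ)
    (hmonic : ∀ n, (P n).Monic)
    (hdeg : ∀ n, (P n).natDegree = n)
    (horth : ∀ m n, m ≠ n →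
      ∫ y : ℝ, (P m).eval y * (P n).eval y * w y = 0)
    (h : ℕ → ℝ)
    (hh : ∀ n, h n = ∫ y : ℝ, ((P n).eval y) ^ 2 * w y)
    (hhpos : ∀ n, 0 < h n)
    (α : ℕ → ℝ)
    (hα : ∀ n, α n = (∫ y : ℝ, y * ((P n).eval y) ^ 2 * w y) / h n)
    (R : ℕ → ℝ)
    (hR : ∀ n, R n = γ / h n * ∫ y : ℝ, ((P n).eval y) ^ 2 * w y / (y - t))
    (r : ℕ → ℝ)
    (hr : ∀ n, 1 ≤ n → r n = γ / h (n - 1) *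
      ∫ y : ℝ, (P n).eval y * (P (n - 1)).eval y * w y / (y - t)) :
    ∀ n : ℕ, 1 ≤ n → r (n + 1) + r n = γ + (t - α n) * R n := by
  obtain rfl : w = fisherHartwigWeight t γ A B := funext hw
  set L := integralFunctional (fisherHartwigWeight t γ A B)
    (integrable_eval_mul_fisherHartwigWeight (by linarith))
  set M := integralFunctional (fun y => fisherHartwigWeight t γ A B y / (y - t))
    (integrable_eval_mul_fisherHartwigWeight_div hγ)
  have hL (p q : ℝ[X]) :
      L (p * q) = ∫ y, p.eval y * q.eval y * fisherHartwigWeight t γ A B y := by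
    simp only [L, integralFunctional_apply, eval_mul]
  have hM (p q : ℝ[X]) :
      M (p * q) = ∫ y, p.eval y * q.eval y * fisherHartwigWeight t γ A B y / (y - t) := by
    simp only [M, integralFunctional_apply, eval_mul, mul_div_assoc]
  have hnorm (k : ℕ) : L (P k * P k) = h k := by
    simp_rw [hL, hh, sq]
  have hLX (k : ℕ) : L (X * P k * P k) = α k * h k := by
    rw [hL, hα, div_mul_cancel₀ _ (hhpos k).ne']
    congr 1 with y
    simp only [eval_mul, eval_X]
    ring
  have hr' (k : ℕ) : r (k + 1) = γ / h k * M (P (k + 1) * P k) := by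
    rw [hr _ (Nat.le_add_left 1 k), Nat.add_sub_cancel, hM]
  have hR' (k : ℕ) : R k = γ / h k * M (P k * P k) := by
    simp_rw [hR, hM, sq]
  intro n hn
  obtain ⟨n, rfl⟩ := Nat.exists_eq_add_of_le' hn
  have key := apply_three_term_of_apply_X_sub_C_mul L (M := M) (fun k => ⟨hdeg k, hmonic k⟩)
    (fun m k hmk => (hL _ _).trans (horth m k hmk)) (fun k => hnorm k ▸ (hhpos k).ne')
    (integralFunctional_div_sub_X_sub_C_mul (fisherHartwigWeight_self hγ.ne') _ _) n
  rw [hnorm, hnorm, hLX, mul_div_cancel_right₀ _ (hhpos _).ne'] at key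
  have hγh : γ / h n = γ / h (n + 1) * (h (n + 1) / h n) := by
    field_simp [(hhpos (n + 1)).ne']
  rw [hr' (n + 1), hr', hR', show n + 1 + 1 = n + 2 from rfl, hγh, mul_assoc, ← mul_add, key,
    mul_add, div_mul_cancel₀ _ (hhpos _).ne']
  ring

/-- For every n >= 1, r_{n+1}(t) + r_n(t) = gamma + (t - alpha_n) R_n(t). -/
theorem r_sum_identity
    (t γ A B : ℝ) (hγ : 0 < γ) (hA : 0 ≤ A) (hAB : 0 ≤ A + B)
    (hABpos : 0 < A ∨ 0 < A + B)
    (w : ℝ → ℝ)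
    (hw : ∀ y : ℝ, w y =
      Real.exp (-y ^ 2 + t * y) * |y - t| ^ γ *
        (A + B * (if 0 < y - t then (1 : ℝ) else 0)))
    (P : ℕ → Polynomial ℝ)
    (hmonic : ∀ n, (P n).Monic)
    (hdeg : ∀ n, (P n).natDegree = n)
    (horth : ∀ m n, m ≠ n →
      ∫ y : ℝ, (P m).eval y * (P n).eval y * w y = 0)
    (h : ℕ → ℝ)
    (hh : ∀ n, h n = ∫ y : ℝ, ((P n).eval y) ^ 2 * w y)
    (hhpos : ∀ n, 0 < h n)
    (α : ℕ → ℝ)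
    (hα : ∀ n, α n = (∫ y : ℝ, y * ((P n).eval y) ^ 2 * w y) / h n)
    (R : ℕ → ℝ)
    (hR : ∀ n, R n = γ / h n * ∫ y : ℝ, ((P n).eval y) ^ 2 * w y / (y - t))
    (r : ℕ → ℝ)
    (hr : ∀ n, 1 ≤ n → r n = γ / h (n - 1) *
      ∫ y : ℝ, (P n).eval y * (P (n - 1)).eval y * w y / (y - t)) :
    ∀ n : ℕ, 1 ≤ n → r (n + 1) + r n = γ + (t - α n) * R n :=
  r_sum_identity_general t γ A B hγ w hw P hmonic hdeg horth h hh hhpos α hα R hR r hr
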